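/- For every nonnegative integer n, every nonnegative integer s, and every λ ∈ ℂ with λ ≠ 1, S_n^{(r,k)}(x|a_1,…,a_r) = Σ_{m=0}^n ( (C(n,m)/(1−λ)^s) Σ_{j=0}^s C(s,j)(−λ)^{s−j} S_{n−m}^{(r,k)}(j|a_1,…,a_r) ) H_m^{(s)}(x|λ), as an identity of polynomials in x. -/

import Mathlib

open PowerSeries Finset

/-- The formal power series `e^{c·t}` over a commutative `ℚ`-algebra `R`. -/
noncomputable def expS {R : Type*} [CommRing R] [Algebra ℚ R] (c : R) : PowerSeries R :=
  PowerSeries.rescale c (PowerSeries.exp R)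

/-- The formal power series `Li_k(1 - e^{-t})` over `ℂ`, where
`Li_k(z) = ∑_{m ≥ 1} z^m / m^k` is the `k`-th polylogarithm.  Since `1 - e^{-t}`
has order `1`, the coefficient of `t^n` only involves the terms with `1 ≤ m ≤ n`. -/
noncomputable def Lik (k : ℤ) : PowerSeries ℂ :=
  PowerSeries.mk fun n => ∑ m ∈ Finset.Icc 1 n,
    ((m : ℂ) ^ k)⁻¹ * PowerSeries.coeff n ((1 - expS (-1 : ℂ)) ^ m)

/-- The exponential generating function `∑_n p n · t^n / n!` of a sequence of
complex polynomials. -/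
noncomputable def egf (p : ℕ → Polynomial ℂ) : PowerSeries (Polynomial ℂ) :=
  PowerSeries.mk fun n => ((n.factorial : ℂ))⁻¹ • p n

/-! Only the Appell property of `S` matters: its generating function is `F(t) e^{xt}` with `F`
free of `x`, so specialising `x := j` gives `F(t) e^{jt} = ∑ S_n(j) t^n/n!`. Expanding
`(e^t - λ)^s = ∑_j C(s,j) (-λ)^{s-j} e^{jt}` then shows that `(e^t - λ)^s F(t)` is the
generating function of `∑_j C(s,j) (-λ)^{s-j} S_n(j)`, and
`F(t) e^{xt} = (e^t - λ)^s F(t) / (1 - λ)^s · (1 - λ)^s e^{xt} / (e^t - λ)^s`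
is a product of two exponential generating functions, the second one that of `H_n(x)`.
Comparing coefficients of this binomial convolution gives the identity. -/

open scoped Polynomial

section ExponentialSeries

variable {R R' : Type*} [CommRing R] [CommRing R'] [Algebra ℚ R] [Algebra ℚ R']

theorem map_expS (f : R →+* R') (c : R) : map f (expS c) = expS (f c) := by
  ext n
  simp [expS, coeff_rescale]

theorem constantCoeff_expS (c : R) : constantCoeff (expS c) = 1 := by
  simp [expS, ← coeff_zero_eq_constantCoeff_apply, coeff_rescale]

theorem coeff_one_expS (c : R) : coeff 1 (expS c) = c := by
  simp [expS, coeff_rescale]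

theorem expS_ne_one {c : R} (hc : c ≠ 0) : expS c ≠ 1 := fun h => hc <| by
  simpa [coeff_one_expS] using congrArg (coeff 1) h

theorem expS_sub_C_ne_zero (c : R) {μ : R} (hμ : μ ≠ 1) : expS c - PowerSeries.C μ ≠ 0 :=
  fun h => hμ <| by
    have h0 := congrArg constantCoeff h
    rw [map_sub, constantCoeff_expS, constantCoeff_C, map_zero, sub_eq_zero] at h0
    exact h0.symm

theorem expS_one_pow (j : ℕ) : expS (1 : R) ^ j = expS (j : R) := by
  rw [expS, rescale_one, RingHom.id_apply, exp_pow_eq_rescale_exp, expS]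

theorem expS_one_sub_C_pow (μ : R) (s : ℕ) :
    (expS (1 : R) - PowerSeries.C μ) ^ s
      = ∑ j ∈ range (s + 1),
          PowerSeries.C ((s.choose j : R) * (-μ) ^ (s - j)) * expS (j : R) := by
  rw [sub_eq_add_neg, add_pow]
  refine sum_congr rfl fun j _ => ?_
  rw [expS_one_pow, ← map_neg, ← map_pow, ← map_natCast (PowerSeries.C (R := R)), map_mul]
  ring

end ExponentialSeries

section ExponentialGeneratingFunction

theorem egf_injective : Function.Injective egf := fun p q h => funext fun n => by
  have hn := congrArg (coeff n) h
  simp only [egf, coeff_mk] at hn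
  exact smul_right_injective _ (inv_ne_zero (Nat.cast_ne_zero.mpr n.factorial_ne_zero)) hn

theorem C_C_mul_egf (c : ℂ) (p : ℕ → ℂ[X]) :
    PowerSeries.C (Polynomial.C c) * egf p = egf fun n => Polynomial.C c * p n := by
  ext n : 1
  simp only [egf, coeff_C_mul, coeff_mk, mul_smul_comm]

theorem egf_sum {ι : Type*} (t : Finset ι) (p : ι → ℕ → ℂ[X]) :
    egf (fun n => ∑ j ∈ t, p j n) = ∑ j ∈ t, egf (p j) := by
  ext n : 1
  simp only [egf, coeff_mk, map_sum, smul_sum]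

theorem map_egf (f : ℂ[X] →ₐ[ℂ] ℂ[X]) (p : ℕ → ℂ[X]) :
    map (f : ℂ[X] →+* ℂ[X]) (egf p) = egf fun n => f (p n) := by
  ext n : 1
  simp [egf]

theorem egf_mul (p q : ℕ → ℂ[X]) :
    egf p * egf q
      = egf fun n => ∑ m ∈ range (n + 1), (n.choose m : ℂ) • (p (n - m) * q m) := by
  ext n : 1
  rw [coeff_mul, Nat.sum_antidiagonal_eq_sum_range_succ_mk, ← sum_range_reflect]
  simp only [egf, coeff_mk, smul_sum]
  refine sum_congr rfl fun m hm => ?_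
  have hmn : m ≤ n := Nat.lt_succ_iff.mp (mem_range.mp hm)
  rw [Nat.succ_sub_one, Nat.sub_sub_self hmn, smul_mul_smul_comm, smul_smul,
    Nat.cast_choose ℂ hmn]
  have hn : (n.factorial : ℂ) ≠ 0 := Nat.cast_ne_zero.mpr n.factorial_ne_zero
  congr 1
  field_simp

end ExponentialGeneratingFunction

section FrobeniusEulerExpansion

-- `F = N / A`, kept as a pair so that no division of power series is needed.
variable {N A : PowerSeries ℂ} {S : ℕ → ℂ[X]}

theorem mul_expS_C_eq_mul_egf_eval
    (hS : map Polynomial.C N * expS Polynomial.X = map Polynomial.C A * egf S) (x : ℂ) :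
    map Polynomial.C N * expS (Polynomial.C x)
      = map Polynomial.C A * egf fun q => Polynomial.C ((S q).eval x) := by
  let f : ℂ[X] →ₐ[ℂ] ℂ[X] := Polynomial.aeval (Polynomial.C x)
  have hconst (F : ℂ⟦X⟧) :
      map (f : ℂ[X] →+* ℂ[X]) (map Polynomial.C F) = map Polynomial.C F := by
    ext n : 1
    simp [f]
  have heval (p : ℂ[X]) : f p = Polynomial.C (p.eval x) :=
    Polynomial.aeval_algebraMap_apply_eq_algebraMap_eval x p
  simpa [hconst, heval, map_expS, map_egf, f] using congrArg (map (f : ℂ[X] →+* ℂ[X])) hS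

theorem map_C_mul_egf_binomial_eval
    (hS : map Polynomial.C N * expS Polynomial.X = map Polynomial.C A * egf S)
    (s : ℕ) (lam : ℂ) :
    map Polynomial.C A * egf (fun q => Polynomial.C (∑ j ∈ range (s + 1),
        (s.choose j : ℂ) * (-lam) ^ (s - j) * (S q).eval (j : ℂ)))
      = (expS 1 - PowerSeries.C (Polynomial.C lam)) ^ s * map Polynomial.C N := by
  simp only [map_sum, egf_sum, mul_sum, expS_one_sub_C_pow, sum_mul]
  refine sum_congr rfl fun j _ => ?_
  calc map Polynomial.C A * egf (fun q => Polynomial.C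
          ((s.choose j : ℂ) * (-lam) ^ (s - j) * (S q).eval (j : ℂ)))
      = PowerSeries.C (Polynomial.C ((s.choose j : ℂ) * (-lam) ^ (s - j)))
          * (map Polynomial.C A * egf fun q => Polynomial.C ((S q).eval (j : ℂ))) := by
        rw [mul_left_comm, C_C_mul_egf]
        simp only [Polynomial.C_mul]
    _ = PowerSeries.C (Polynomial.C ((s.choose j : ℂ) * (-lam) ^ (s - j)))
          * (map Polynomial.C N * expS (Polynomial.C (j : ℂ))) := by
        rw [mul_expS_C_eq_mul_egf_eval hS]
    _ = _ := by
        simp only [Polynomial.C_mul, Polynomial.C_pow, Polynomial.C_neg, map_natCast]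
        ring

theorem C_mul_egf_eq_egf_binomial_eval_mul (hA : A ≠ 0)
    (hS : map Polynomial.C N * expS Polynomial.X = map Polynomial.C A * egf S)
    {s : ℕ} {lam : ℂ} (hlam : lam ≠ 1) {H : ℕ → ℂ[X]}
    (hH : PowerSeries.C (Polynomial.C ((1 - lam) ^ s)) * expS Polynomial.X
        = (expS 1 - PowerSeries.C (Polynomial.C lam)) ^ s * egf H) :
    PowerSeries.C (Polynomial.C ((1 - lam) ^ s)) * egf S
      = egf (fun q => Polynomial.C (∑ j ∈ range (s + 1),
          (s.choose j : ℂ) * (-lam) ^ (s - j) * (S q).eval (j : ℂ))) * egf H := by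
  have hA' : map Polynomial.C A ≠ 0 := (map_eq_zero _ _).not.mpr hA
  have hB : (expS 1 - PowerSeries.C (Polynomial.C lam)) ^ s ≠ 0 :=
    pow_ne_zero _ (expS_sub_C_ne_zero _ (by rwa [Ne, ← Polynomial.C_1, Polynomial.C_inj]))
  refine mul_left_cancel₀ (mul_ne_zero hA' hB) ?_
  calc _ = (expS 1 - PowerSeries.C (Polynomial.C lam)) ^ s * map Polynomial.C N
          * PowerSeries.C (Polynomial.C ((1 - lam) ^ s)) * expS Polynomial.X := by
        linear_combination (-(expS 1 - PowerSeries.C (Polynomial.C lam)) ^ s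
          * PowerSeries.C (Polynomial.C ((1 - lam) ^ s))) * hS
    _ = _ := by
        rw [← map_C_mul_egf_binomial_eval hS]
        linear_combination (map Polynomial.C A * egf _) * hH

theorem eq_sum_binomial_eval_mul_frobeniusEuler (hA : A ≠ 0)
    (hS : map Polynomial.C N * expS Polynomial.X = map Polynomial.C A * egf S)
    {s : ℕ} {lam : ℂ} (hlam : lam ≠ 1) {H : ℕ → ℂ[X]}
    (hH : PowerSeries.C (Polynomial.C ((1 - lam) ^ s)) * expS Polynomial.X
        = (expS 1 - PowerSeries.C (Polynomial.C lam)) ^ s * egf H) (n : ℕ) :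
    S n = ∑ m ∈ range (n + 1),
      Polynomial.C ((n.choose m : ℂ) / (1 - lam) ^ s
          * ∑ j ∈ range (s + 1),
              (s.choose j : ℂ) * (-lam) ^ (s - j) * (S (n - m)).eval (j : ℂ))
        * H m := by
  have hkey := C_mul_egf_eq_egf_binomial_eval_mul hA hS hlam hH
  rw [C_C_mul_egf, egf_mul] at hkey
  have hn := congrFun (egf_injective hkey) n
  have hp : ((1 : ℂ) - lam) ^ s ≠ 0 := pow_ne_zero _ (sub_ne_zero.mpr hlam.symm)
  calc S n = Polynomial.C (((1 - lam) ^ s)⁻¹) * (Polynomial.C ((1 - lam) ^ s) * S n) := by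
        rw [← mul_assoc, ← Polynomial.C_mul, inv_mul_cancel₀ hp, Polynomial.C_1, one_mul]
    _ = _ := by
        rw [hn, mul_sum]
        refine sum_congr rfl fun m _ => ?_
        rw [Polynomial.smul_eq_C_mul, div_eq_mul_inv]
        simp only [Polynomial.C_mul]
        ring

end FrobeniusEulerExpansion

theorem stmt11_general (r : ℕ) (k : ℤ) (a : Fin r → ℂ) (ha : ∀ j, a j ≠ 0)
    (s : ℕ) (lam : ℂ) (hlam : lam ≠ 1)
    (S H : ℕ → Polynomial ℂ)
    -- `S n` is the mixed-type polynomial `S_n^{(r,k)}(x|a_1,…,a_r)`: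
    (hS : (PowerSeries.X : PowerSeries (Polynomial ℂ)) ^ r
        * PowerSeries.map Polynomial.C (Lik k) * expS Polynomial.X
        = (∏ j, (expS (Polynomial.C (a j)) - 1)) * (1 - expS (-1 : Polynomial ℂ)) * egf S)
    -- `H n` is the Frobenius-Euler polynomial `H_n^{(s)}(x|λ)` of order `s`, defined by
    -- `((1-λ)/(e^t-λ))^s e^{xt} = ∑_n H_n^{(s)}(x|λ) t^n/n!`:
    (hH : PowerSeries.C (Polynomial.C ((1 - lam) ^ s)) * expS Polynomial.X
        = (expS (1 : Polynomial ℂ) - PowerSeries.C (Polynomial.C lam)) ^ s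
          * egf H)
    (n : ℕ) :
    S n = ∑ m ∈ Finset.range (n + 1),
      Polynomial.C ((n.choose m : ℂ) / (1 - lam) ^ s
          * ∑ j ∈ Finset.range (s + 1),
              (s.choose j : ℂ) * (-lam) ^ (s - j) * (S (n - m)).eval (j : ℂ))
        * H m := by
  have hA : (∏ j, (expS (a j) - 1)) * (1 - expS (-1 : ℂ)) ≠ 0 :=
    mul_ne_zero (prod_ne_zero_iff.mpr fun j _ => sub_ne_zero.mpr (expS_ne_one (ha j)))
      (sub_ne_zero.mpr (expS_ne_one (neg_ne_zero.mpr one_ne_zero)).symm)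
  refine eq_sum_binomial_eval_mul_frobeniusEuler (N := X ^ r * Lik k) hA ?_ hlam hH n
  simpa [map_expS] using hS

theorem stmt11 (r : ℕ) (hr : 0 < r) (k : ℤ) (a : Fin r → ℂ) (ha : ∀ j, a j ≠ 0)
    (s : ℕ) (lam : ℂ) (hlam : lam ≠ 1)
    (S H : ℕ → Polynomial ℂ)
    -- `S n` is the mixed-type polynomial `S_n^{(r,k)}(x|a_1,…,a_r)`:
    (hS : (PowerSeries.X : PowerSeries (Polynomial ℂ)) ^ r
        * PowerSeries.map Polynomial.C (Lik k) * expS Polynomial.X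
        = (∏ j, (expS (Polynomial.C (a j)) - 1)) * (1 - expS (-1 : Polynomial ℂ)) * egf S)
    -- `H n` is the Frobenius-Euler polynomial `H_n^{(s)}(x|λ)` of order `s`, defined by
    -- `((1-λ)/(e^t-λ))^s e^{xt} = ∑_n H_n^{(s)}(x|λ) t^n/n!`:
    (hH : PowerSeries.C (Polynomial.C ((1 - lam) ^ s)) * expS Polynomial.X
        = (expS (1 : Polynomial ℂ) - PowerSeries.C (Polynomial.C lam)) ^ s
          * egf H)
    (n : ℕ) :
    S n = ∑ m ∈ Finset.range (n + 1),
      Polynomial.C ((n.choose m : ℂ) / (1 - lam) ^ s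
          * ∑ j ∈ Finset.range (s + 1),
              (s.choose j : ℂ) * (-lam) ^ (s - j) * (S (n - m)).eval (j : ℂ))
        * H m :=
  stmt11_general r k a ha s lam hlam S H hS hH n
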